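/- arXiv:0903.2555 — 4 statements merged into one kernel-verified Lean document; each statement's English description precedes it below -/
import Mathlib

section
/- If X and Y are subsets of the positive integers with X ∩ Y = ∅, then for all n ≥ 1 and all k ≥ 0, the number of permutations of [n] with exactly k (X,Y)-place-value pairs equals the number of permutations of [n] with exactly k (X,Y)-adjacencies, i.e. V_{n,k}^{X,Y} = A_{n,k}^{X,Y}. -/
/-- `val_{X,Y}(σ)`: number of positions `i ∈ [n]` with `i ∈ X` and `σ_i ∈ Y`
(positions and values of `Fin n` are identified with `{1, ..., n}` via `i ↦ i + 1`). -/
noncomputable def valCount (X Y : Set ℕ) (n : ℕ) (σ : Equiv.Perm (Fin n)) : ℕ :=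
  {i : Fin n | ((i : ℕ) + 1) ∈ X ∧ (((σ i : ℕ)) + 1) ∈ Y}.ncard

/-- `V_{n,k}^{X,Y}`: the number of permutations of `[n]` with exactly `k`
`(X,Y)`-place-value pairs. -/
noncomputable def V (X Y : Set ℕ) (n k : ℕ) : ℕ :=
  Nat.card {σ : Equiv.Perm (Fin n) | valCount X Y n σ = k}

/-- `adj_{X,Y}(σ)`: number of `i` with `σ_i ∈ X` and `σ_{i+1} ∈ Y`
(positions and values of `Fin n` are identified with `{1, ..., n}` via `i ↦ i + 1`). -/
noncomputable def adjCount (X Y : Set ℕ) (n : ℕ) (σ : Equiv.Perm (Fin n)) : ℕ :=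
  {i : Fin n | ∃ h : (i : ℕ) + 1 < n,
    ((σ i : ℕ) + 1) ∈ X ∧ ((σ ⟨(i : ℕ) + 1, h⟩ : ℕ) + 1) ∈ Y}.ncard

/-- `A_{n,s}^{X,Y}`: the number of permutations of `[n]` with exactly `s`
`(X,Y)`-adjacencies. -/
noncomputable def A (X Y : Set ℕ) (n s : ℕ) : ℕ :=
  Nat.card {σ : Equiv.Perm (Fin n) | adjCount X Y n σ = s}

/-!
Both statistics are built up by inserting the largest letter `N = n + 1` into a permutation of
`[n]` at one of `n + 1` slots: for `val` the letter `N` enters a cycle right after some `i`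
(or becomes a fixed point), for `adj` it enters the word `0 ρ₁ ⋯ ρₙ 0` right after some letter.
Each slot carries a pair `(a, b)` — `(i, σ i)`, resp. two adjacent letters — which is replaced
by `(a, N)` and `(N, b)`, so the statistic changes by
`[a ∈ X ∧ N ∈ Y] + [N ∈ X ∧ b ∈ Y] - [a ∈ X ∧ b ∈ Y]`.
In both cases `|X ∩ [n]|` slots have `a ∈ X`, `|Y ∩ [n]|` slots have `b ∈ Y` and `s` slots have
both, where `s` is the old value of the statistic; so the multiset of new values only depends
on `s`, and induction on `n` shows that the two statistics are equidistributed.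
-/

open Finset Function Equiv Fin
open scoped Classical

namespace Multiset

theorem map_univ_eq_bind_of_bijective {α β γ δ : Type*} [Fintype α] [Fintype β] [Fintype γ]
    {φ : γ × β → α} (hφ : Bijective φ) (f : α → δ) :
    univ.val.map f = univ.val.bind fun c => univ.val.map fun b => f (φ (c, b)) := by
  rw [← map_univ_val_equiv (Equiv.ofBijective φ hφ), map_map, ← univ_product_univ, product_val]
  simp [SProd.sprod, Multiset.product, map_bind, Function.comp_def]

theorem map_univ_eq_of_fiberwise {α α' β β' γ γ' δ ε : Type*} [Fintype α] [Fintype α']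
    [Fintype β] [Fintype β'] [Fintype γ] [Fintype γ']
    {φ : γ × β → α} (hφ : Bijective φ) {ψ : γ' × β' → α'} (hψ : Bijective ψ)
    {f : α → δ} {g : α' → δ} {f₀ : γ → ε} {g₀ : γ' → ε}
    (h₀ : univ.val.map f₀ = univ.val.map g₀)
    (hfiber : ∀ c c', f₀ c = g₀ c' →
      univ.val.map (fun b => f (φ (c, b))) = univ.val.map fun b => g (ψ (c', b))) :
    univ.val.map f = univ.val.map g := by
  have hg₀ : ∀ c, ∃ c', g₀ c' = f₀ c := fun c => by
    simpa [eq_comm] using (h₀ ▸ mem_map_of_mem f₀ (mem_univ_val c) : f₀ c ∈ univ.val.map g₀)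
  have hf₀ : ∀ c', ∃ c, f₀ c = g₀ c' := fun c' => by
    simpa using (h₀ ▸ mem_map_of_mem g₀ (mem_univ_val c') : g₀ c' ∈ univ.val.map f₀)
  -- by `hfiber`, the fibre over `c` only depends on `f₀ c`
  let M : ε → Multiset δ := fun s =>
    if h : ∃ c', g₀ c' = s then univ.val.map fun b => g (ψ (h.choose, b)) else 0
  have hMf : ∀ c, univ.val.map (fun b => f (φ (c, b))) = M (f₀ c) := fun c => by
    have h := hg₀ c
    simp only [M, dif_pos h]
    exact hfiber c _ h.choose_spec.symm
  have hMg : ∀ c', univ.val.map (fun b => g (ψ (c', b))) = M (g₀ c') := fun c' => by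
    obtain ⟨c, hc⟩ := hf₀ c'
    have h : ∃ c'', g₀ c'' = g₀ c' := ⟨c', rfl⟩
    simp only [M, dif_pos h]
    rw [← hfiber c c' hc, hfiber c _ (hc.trans h.choose_spec.symm)]
  rw [map_univ_eq_bind_of_bijective hφ, map_univ_eq_bind_of_bijective hψ]
  simp only [hMf, hMg]
  rw [← bind_map, ← bind_map, h₀]

theorem map_univ_val_comp_equiv {α β γ : Type*} [Fintype α] [Fintype β] (e : α ≃ β)
    (f : β → γ) : univ.val.map (fun a => f (e a)) = univ.val.map f := by
  rw [← map_univ_val_equiv e, map_map]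
  rfl

theorem eq_of_map_fst_eq_of_map_snd_eq {m m' : Multiset (Bool × Bool)}
    (h₁ : m.map Prod.fst = m'.map Prod.fst) (h₂ : m.map Prod.snd = m'.map Prod.snd)
    (h : m.count (true, true) = m'.count (true, true)) : m = m' := by
  have key : ∀ m : Multiset (Bool × Bool), ∀ a b : Bool,
      (m.map Prod.fst).count a = m.count (a, true) + m.count (a, false) ∧
      (m.map Prod.snd).count b = m.count (true, b) + m.count (false, b) := by
    intro m a b
    induction m using Multiset.induction_on with
    | empty => simp
    | cons x m ih =>
      obtain ⟨x₁, x₂⟩ := x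
      simp only [map_cons, count_cons, Prod.mk.injEq]
      cases a <;> cases b <;> cases x₁ <;> cases x₂ <;> simp <;> omega
  ext ⟨a, b⟩
  have e₁ := key m a b
  have e₂ := key m' a b
  have f₁ := key m true true
  have f₂ := key m' true true
  have g₁ := key m false false
  have g₂ := key m' false false
  rw [h₁, h₂] at e₁ f₁ g₁
  cases a <;> cases b <;> omega

end Multiset

theorem Fin.univ_val_map_succ {α : Type*} {n : ℕ} (f : Fin (n + 1) → α) :
    univ.val.map f = f 0 ::ₘ univ.val.map fun i : Fin n => f i.succ := by
  rw [Fin.univ_succ, Finset.cons_val, Finset.map_val, Multiset.map_cons, Multiset.map_map]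
  rfl

theorem Fin.univ_val_map_castSucc {α : Type*} {n : ℕ} (f : Fin (n + 1) → α) :
    univ.val.map f = f (last n) ::ₘ univ.val.map fun i : Fin n => f i.castSucc := by
  rw [Fin.univ_castSuccEmb, Finset.cons_val, Finset.map_val, Multiset.map_cons, Multiset.map_map]
  rfl

theorem Nat.card_setOf_eq_count_map {α : Type*} [Fintype α] (f : α → ℕ) (k : ℕ) :
    Nat.card {a | f a = k} = (univ.val.map f).count k := by
  rw [Multiset.count_map, ← Finset.filter_val, Finset.card_val, Nat.card_eq_fintype_card,
    Fintype.card_ofFinset]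
  simp [eq_comm]

section Insertion

variable {n : ℕ}

def extendLast (σ : Perm (Fin n)) : Perm (Fin (n + 1)) :=
  finSuccEquivLast.symm.permCongr σ.optionCongr

@[simp] theorem extendLast_castSucc (σ : Perm (Fin n)) (i : Fin n) :
    extendLast σ i.castSucc = (σ i).castSucc := by
  simp [extendLast, Equiv.permCongr_apply, finSuccEquivLast_castSucc]

@[simp] theorem extendLast_last (σ : Perm (Fin n)) : extendLast σ (last n) = last n := by
  simp [extendLast, Equiv.permCongr_apply, finSuccEquivLast_last]

theorem bijective_extendLast_mul {τ : Fin (n + 1) → Perm (Fin (n + 1))}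
    (hτ : ∀ r, τ r r = last n) :
    Bijective fun x : Perm (Fin n) × Fin (n + 1) => extendLast x.1 * τ x.2 := by
  rw [Fintype.bijective_iff_injective_and_card]
  refine ⟨fun ⟨σ, r⟩ ⟨σ', r'⟩ h => ?_, by simp [Fintype.card_perm, Nat.factorial_succ, mul_comm]⟩
  simp only at h
  have h₁ : (extendLast σ' * τ r') r = last n := by rw [← h]; simp [hτ]
  have h₂ : (extendLast σ' * τ r') r' = last n := by simp [hτ]
  have hr : r = r' := (extendLast σ' * τ r').injective (h₁.trans h₂.symm)
  subst hr
  have hσ : extendLast σ = extendLast σ' := mul_right_cancel h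
  have : σ = σ' := Equiv.ext fun i => castSucc_injective n <| by
    rw [← extendLast_castSucc, hσ, extendLast_castSucc]
  rw [this]

/-- `σ` with `n + 1` inserted into its cycles as `r ↦ n + 1 ↦ σ r` (positions are 0-indexed);
for `r = last n`, `n + 1` becomes a fixed point. -/
def cycleInsert (σ : Perm (Fin n)) (r : Fin (n + 1)) : Perm (Fin (n + 1)) :=
  extendLast σ * swap r (last n)

def moveToLast (q : Fin (n + 1)) : Perm (Fin (n + 1)) :=
  (finSuccEquiv' q).trans finSuccEquivLast.symm

@[simp] theorem moveToLast_self (q : Fin (n + 1)) : moveToLast q q = last n := by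
  simp [moveToLast]

/-- The word of `ρ` with the letter `n + 1` inserted at position `q`. -/
def wordInsert (ρ : Perm (Fin n)) (q : Fin (n + 1)) : Perm (Fin (n + 1)) :=
  extendLast ρ * moveToLast q

@[simp] theorem wordInsert_succAbove (ρ : Perm (Fin n)) (q : Fin (n + 1)) (i : Fin n) :
    wordInsert ρ q (q.succAbove i) = (ρ i).castSucc := by
  simp [wordInsert, moveToLast, finSuccEquivLast_symm_some]

/-- The word `0 ρ₁ ⋯ ρₙ 0 0 ⋯` of `ρ`, with letters shifted to `1, …, n` and `0` as sentinel. -/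
def permWord (ρ : Perm (Fin n)) : ℕ → ℕ
  | 0 => 0
  | j + 1 => if h : j < n then ρ ⟨j, h⟩ + 1 else 0

@[simp] theorem permWord_zero (ρ : Perm (Fin n)) : permWord ρ 0 = 0 := rfl

@[simp] theorem permWord_succ (ρ : Perm (Fin n)) (i : Fin n) : permWord ρ (i + 1) = ρ i + 1 := by
  simp [permWord]

theorem permWord_eq_zero_of_lt (ρ : Perm (Fin n)) {j : ℕ} (hj : n < j) : permWord ρ j = 0 := by
  obtain ⟨k, rfl⟩ : ∃ k, j = k + 1 := ⟨j - 1, by omega⟩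
  simp [permWord, show ¬ k < n by omega]

def seqInsert (u : ℕ → ℕ) (p a : ℕ) (j : ℕ) : ℕ :=
  if j < p then u j else if j = p then a else u (j - 1)

section seqInsert

variable (u : ℕ → ℕ) (p a : ℕ)

theorem seqInsert_of_lt {j : ℕ} (h : j < p) : seqInsert u p a j = u j := if_pos h

@[simp] theorem seqInsert_self : seqInsert u p a p = a := by simp [seqInsert]

theorem seqInsert_of_gt {j : ℕ} (h : p < j) : seqInsert u p a j = u (j - 1) := by
  simp [seqInsert, show ¬ j < p by omega, show j ≠ p by omega]

end seqInsert

theorem permWord_wordInsert (ρ : Perm (Fin n)) (q : Fin (n + 1)) :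
    permWord (wordInsert ρ q) = seqInsert (permWord ρ) (q + 1) (n + 1) := by
  funext j
  rcases j with _ | j
  · simp [seqInsert]
  by_cases hj : j < n + 1
  swap
  · rw [permWord_eq_zero_of_lt _ (by omega), seqInsert_of_gt _ _ _ (by omega),
      permWord_eq_zero_of_lt _ (by omega)]
  rw [show j + 1 = ((⟨j, hj⟩ : Fin (n + 1)) : ℕ) + 1 from rfl, permWord_succ]
  rcases lt_trichotomy j q with hlt | rfl | hgt
  · have : (⟨j, hj⟩ : Fin (n + 1)) = q.succAbove ⟨j, by omega⟩ :=
      (succAbove_of_castSucc_lt q ⟨j, by omega⟩ (by simpa [Fin.lt_def] using hlt)).symm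
    rw [seqInsert_of_lt _ _ _ (by simpa using hlt)]
    conv_lhs => rw [this, wordInsert_succAbove]
    exact (permWord_succ ρ _).symm
  · simp [wordInsert]
  · obtain ⟨k, rfl⟩ : ∃ k, j = k + 1 := ⟨j - 1, by omega⟩
    have : (⟨k + 1, hj⟩ : Fin (n + 1)) = q.succAbove ⟨k, by omega⟩ :=
      (succAbove_of_le_castSucc q ⟨k, by omega⟩ (by simp [Fin.le_def]; omega)).symm
    rw [seqInsert_of_gt _ _ _ (by simpa using hgt)]
    conv_lhs => rw [this, wordInsert_succAbove]
    exact (permWord_succ ρ _).symm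

end Insertion

section Statistics

variable (X Y : Set ℕ) {n : ℕ}

noncomputable def pairInd (p : ℕ × ℕ) : ℕ := if p.1 ∈ X ∧ p.2 ∈ Y then 1 else 0

theorem pairInd_zero_left (hX : 0 ∉ X) (b : ℕ) : pairInd X Y (0, b) = 0 :=
  if_neg fun h => hX h.1

theorem pairInd_zero_right (hY : 0 ∉ Y) (a : ℕ) : pairInd X Y (a, 0) = 0 :=
  if_neg fun h => hY h.2

theorem valCount_eq_sum (σ : Perm (Fin n)) :
    valCount X Y n σ = ∑ i : Fin n, pairInd X Y ((i : ℕ) + 1, (σ i : ℕ) + 1) := by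
  rw [valCount, Set.ncard_eq_toFinset_card', Set.toFinset_ofPred, card_filter]
  rfl

theorem adjCount_eq_sum (hX : 0 ∉ X) (hY : 0 ∉ Y) (ρ : Perm (Fin n)) :
    adjCount X Y n ρ = ∑ j ∈ range (n + 1), pairInd X Y (permWord ρ j, permWord ρ (j + 1)) := by
  rw [adjCount, Set.ncard_eq_toFinset_card', Set.toFinset_ofPred, card_filter, sum_range_succ',
    permWord_zero, pairInd_zero_left X Y hX, add_zero, ← sum_univ_eq_sum_range]
  refine sum_congr rfl fun i _ => ?_
  by_cases hi : (i : ℕ) + 1 < n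
  · rw [show (i : ℕ) + 1 + 1 = ((⟨i + 1, hi⟩ : Fin n) : ℕ) + 1 from rfl, permWord_succ,
      permWord_succ]
    simp [hi, pairInd]
  · rw [permWord_eq_zero_of_lt ρ (show n < i + 1 + 1 by omega), pairInd_zero_right X Y hY]
    simp [hi]

theorem sum_pairInd_seqInsert (u : ℕ → ℕ) (a : ℕ) {q m : ℕ} (hq : q < m) :
    ∑ j ∈ range (m + 1), pairInd X Y (seqInsert u (q + 1) a j, seqInsert u (q + 1) a (j + 1))
        + pairInd X Y (u q, u (q + 1)) =
      ∑ j ∈ range m, pairInd X Y (u j, u (j + 1)) + pairInd X Y (u q, a)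
        + pairInd X Y (a, u (q + 1)) := by
  induction m, hq using Nat.le_induction with
  | base =>
    have hpre : ∑ j ∈ range q,
        pairInd X Y (seqInsert u (q + 1) a j, seqInsert u (q + 1) a (j + 1)) =
          ∑ j ∈ range q, pairInd X Y (u j, u (j + 1)) :=
      sum_congr rfl fun j hj => by
        have := mem_range.mp hj
        rw [seqInsert_of_lt u _ a (j := j) (by omega),
          seqInsert_of_lt u _ a (j := j + 1) (by omega)]
    rw [Nat.succ_eq_add_one, sum_range_succ, sum_range_succ, hpre, sum_range_succ,
      seqInsert_of_lt u _ a (j := q) (by omega), seqInsert_self,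
      seqInsert_of_gt u _ a (j := q + 1 + 1) (by omega), Nat.add_sub_cancel]
    omega
  | succ m hm ih =>
    rw [sum_range_succ _ (m + 1), sum_range_succ (fun j => pairInd X Y (u j, u (j + 1))) m,
      seqInsert_of_gt u _ a (j := m + 1) (by omega),
      seqInsert_of_gt u _ a (j := m + 1 + 1) (by omega), Nat.add_sub_cancel, Nat.add_sub_cancel]
    omega

/-- The pair destroyed by `cycleInsert σ r`: `(r + 1, σ r + 1)`, or the sentinel `(0, 0)` when
`n + 1` becomes a fixed point. -/
def cycleSlot (σ : Perm (Fin n)) : Fin (n + 1) → ℕ × ℕ :=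
  snoc (α := fun _ => ℕ × ℕ) (fun i => ((i : ℕ) + 1, (σ i : ℕ) + 1)) (0, 0)

/-- The pair of adjacent letters separated by `wordInsert ρ q`. -/
def wordSlot (ρ : Perm (Fin n)) (q : Fin (n + 1)) : ℕ × ℕ := (permWord ρ q, permWord ρ (q + 1))

theorem valCount_cycleInsert (hX : 0 ∉ X) (hY : 0 ∉ Y) (hXY : X ∩ Y = ∅)
    (σ : Perm (Fin n)) (r : Fin (n + 1)) :
    valCount X Y (n + 1) (cycleInsert σ r) + pairInd X Y (cycleSlot σ r) =
      valCount X Y n σ + pairInd X Y ((cycleSlot σ r).1, n + 1)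
        + pairInd X Y (n + 1, (cycleSlot σ r).2) := by
  have hsum : valCount X Y (n + 1) (cycleInsert σ r) =
      ∑ i : Fin n, pairInd X Y ((swap r (last n) i.castSucc : ℕ) + 1, (σ i : ℕ) + 1)
        + pairInd X Y ((r : ℕ) + 1, n + 1) := by
    rw [valCount_eq_sum, ← Equiv.sum_comp (swap r (last n)), sum_univ_castSucc]
    simp [cycleInsert, swap_apply_self]
  rw [hsum, valCount_eq_sum]
  induction r using lastCases with
  | last =>
    have hN : pairInd X Y (n + 1, n + 1) = 0 :=
      if_neg fun h => (Set.eq_empty_iff_forall_notMem.mp hXY _) ⟨h.1, h.2⟩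
    simp [cycleSlot, hN, pairInd_zero_left X Y hX, pairInd_zero_right X Y hY]
  | cast i =>
    rw [Fintype.sum_eq_add_sum_compl i, Fintype.sum_eq_add_sum_compl i]
    have hrest : ∑ j ∈ {i}ᶜ, pairInd X Y ((swap i.castSucc (last n) j.castSucc : ℕ) + 1,
        (σ j : ℕ) + 1) = ∑ j ∈ {i}ᶜ, pairInd X Y ((j : ℕ) + 1, (σ j : ℕ) + 1) :=
      sum_congr rfl fun j hj => by
        rw [swap_apply_of_ne_of_ne (by simpa using hj) (castSucc_ne_last j), val_castSucc]
    simp only [hrest, swap_apply_left, val_last, val_castSucc, cycleSlot, snoc_castSucc]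
    omega

theorem adjCount_wordInsert (hX : 0 ∉ X) (hY : 0 ∉ Y) (ρ : Perm (Fin n)) (q : Fin (n + 1)) :
    adjCount X Y (n + 1) (wordInsert ρ q) + pairInd X Y (wordSlot ρ q) =
      adjCount X Y n ρ + pairInd X Y ((wordSlot ρ q).1, n + 1)
        + pairInd X Y (n + 1, (wordSlot ρ q).2) := by
  rw [adjCount_eq_sum X Y hX hY, adjCount_eq_sum X Y hX hY, permWord_wordInsert]
  exact sum_pairInd_seqInsert X Y _ _ q.isLt

noncomputable def memType (p : ℕ × ℕ) : Bool × Bool := (decide (p.1 ∈ X), decide (p.2 ∈ Y))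

/-- The new value of a statistic of value `s` when `N` is inserted at a slot whose pair `(a, b)`
has type `t`: that pair is replaced by `(a, N)` and `(N, b)`. -/
noncomputable def insertedStat (N s : ℕ) (t : Bool × Bool) : ℕ :=
  s + (t.1 && decide (N ∈ Y)).toNat + (decide (N ∈ X) && t.2).toNat - (t.1 && t.2).toNat

theorem map_univ_eq_map_insertedStat {ι : Type*} [Fintype ι] (F : ι → ℕ) (p : ι → ℕ × ℕ)
    (N s : ℕ) (h : ∀ i, F i + pairInd X Y (p i) =
      s + pairInd X Y ((p i).1, N) + pairInd X Y (N, (p i).2)) :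
    univ.val.map F = (univ.val.map fun i => memType X Y (p i)).map (insertedStat X Y N s) := by
  rw [Multiset.map_map]
  refine Multiset.map_congr rfl fun i _ => ?_
  have := h i
  by_cases ha : (p i).1 ∈ X <;> by_cases hb : (p i).2 ∈ Y <;> by_cases hX : N ∈ X <;>
    by_cases hY : N ∈ Y <;> simp [insertedStat, memType, pairInd, ha, hb, hX, hY] at this ⊢ <;>
    omega

theorem count_map_memType {ι : Type*} [Fintype ι] (p : ι → ℕ × ℕ) :
    (univ.val.map fun i => memType X Y (p i)).count (true, true) = ∑ i, pairInd X Y (p i) := by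
  rw [Multiset.count_map, ← Finset.filter_val, Finset.card_val, card_filter]
  simp [memType, pairInd]

theorem map_memType_cycleSlot (hX : 0 ∉ X) (hY : 0 ∉ Y) (σ : Perm (Fin n)) :
    univ.val.map (fun r => memType X Y (cycleSlot σ r)) =
      (false, false) ::ₘ univ.val.map fun i : Fin n => memType X Y ((i : ℕ) + 1, (σ i : ℕ) + 1) := by
  rw [Fin.univ_val_map_castSucc]
  simp only [cycleSlot, snoc_last, snoc_castSucc]
  congr
  simp [memType, hX, hY]

theorem map_fst_memType_wordSlot (hX : 0 ∉ X) (ρ : Perm (Fin n)) :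
    (univ.val.map fun q => memType X Y (wordSlot ρ q)).map Prod.fst =
      false ::ₘ univ.val.map fun i : Fin n => decide ((ρ i : ℕ) + 1 ∈ X) := by
  rw [Multiset.map_map, Fin.univ_val_map_succ]
  simp only [comp_apply, wordSlot, val_zero, permWord_zero, val_succ, permWord_succ]
  simp [memType, hX, -Fin.univ_val_map]

theorem map_snd_memType_wordSlot (hY : 0 ∉ Y) (ρ : Perm (Fin n)) :
    (univ.val.map fun q => memType X Y (wordSlot ρ q)).map Prod.snd =
      false ::ₘ univ.val.map fun i : Fin n => decide ((ρ i : ℕ) + 1 ∈ Y) := by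
  rw [Multiset.map_map, Fin.univ_val_map_castSucc]
  simp only [comp_apply, wordSlot, val_last, val_castSucc, permWord_succ,
    permWord_eq_zero_of_lt ρ (Nat.lt_succ_self n)]
  simp [memType, hY, -Fin.univ_val_map]

theorem map_memType_cycleSlot_eq_wordSlot (hX : 0 ∉ X) (hY : 0 ∉ Y) {σ ρ : Perm (Fin n)}
    (h : valCount X Y n σ = adjCount X Y n ρ) :
    univ.val.map (fun r => memType X Y (cycleSlot σ r)) =
      univ.val.map fun q => memType X Y (wordSlot ρ q) := by
  have hperm (π : Perm (Fin n)) (S : Set ℕ) :=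
    Multiset.map_univ_val_comp_equiv π fun i => decide ((i : ℕ) + 1 ∈ S)
  apply Multiset.eq_of_map_fst_eq_of_map_snd_eq
  · rw [map_fst_memType_wordSlot X Y hX, map_memType_cycleSlot X Y hX hY, Multiset.map_cons,
      Multiset.map_map, hperm]
    rfl
  · rw [map_snd_memType_wordSlot X Y hY, map_memType_cycleSlot X Y hX hY, Multiset.map_cons,
      Multiset.map_map, hperm]
    exact congrArg (false ::ₘ ·) (hperm σ Y)
  · rw [map_memType_cycleSlot X Y hX hY, Multiset.count_cons_of_ne (by simp),
      count_map_memType, count_map_memType, ← valCount_eq_sum, h, adjCount_eq_sum X Y hX hY,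
      ← Fin.sum_univ_eq_sum_range]
    rfl

theorem map_valCount_eq_map_adjCount (hX : 0 ∉ X) (hY : 0 ∉ Y) (hXY : X ∩ Y = ∅) :
    ∀ n, univ.val.map (valCount X Y n) = univ.val.map (adjCount X Y n)
  | 0 => by
    congr 1
    funext σ
    rw [valCount_eq_sum, adjCount_eq_sum X Y hX hY]
    simp [pairInd_zero_left X Y hX]
  | n + 1 => by
    refine Multiset.map_univ_eq_of_fiberwise
      (bijective_extendLast_mul fun r => swap_apply_left r (last n))
      (bijective_extendLast_mul moveToLast_self)
      (map_valCount_eq_map_adjCount hX hY hXY n) fun σ ρ h => ?_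
    change univ.val.map (fun r => valCount X Y (n + 1) (cycleInsert σ r)) =
      univ.val.map fun q => adjCount X Y (n + 1) (wordInsert ρ q)
    rw [map_univ_eq_map_insertedStat X Y _ _ _ _ (valCount_cycleInsert X Y hX hY hXY σ),
      map_univ_eq_map_insertedStat X Y _ _ _ _ (adjCount_wordInsert X Y hX hY ρ), h,
      map_memType_cycleSlot_eq_wordSlot X Y hX hY h]

end Statistics

theorem V_eq_A_general (X Y : Set ℕ) (hX : 0 ∉ X) (hY : 0 ∉ Y) (hXY : X ∩ Y = ∅)
    (n : ℕ) (k : ℕ) :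
    V X Y n k = A X Y n k := by
  rw [V, A, Nat.card_setOf_eq_count_map, Nat.card_setOf_eq_count_map,
    map_valCount_eq_map_adjCount X Y hX hY hXY]

/-- Theorem 5: if `X ∩ Y = ∅`, then `V_{n,k}^{X,Y} = A_{n,k}^{X,Y}` for all `n, k`. -/
theorem V_eq_A (X Y : Set ℕ) (hX : 0 ∉ X) (hY : 0 ∉ Y) (hXY : X ∩ Y = ∅)
    (n : ℕ) (hn : 1 ≤ n) (k : ℕ) :
    V X Y n k = A X Y n k :=
  V_eq_A_general X Y hX hY hXY n k
end

section
/- Let X and Y be subsets of the positive integers, let A = X ∪ Y, and suppose B ⊆ ℕ is such that for every n ≥ 1, b_n = |B ∩ [n]| satisfies: b_n = x_n + y_n if n+1 ∈ X ∩ Y; b_n = y_n if n+1 ∈ X − Y; and b_n = x_n if n+1 ∈ Y − X (where x_n = |X ∩ [n]| and y_n = |Y ∩ [n]|). Then for all n ≥ 1 and all k ≥ 0, D_{n,k}^{A,B} = A_{n,k}^{X,Y}. -/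
/-- `cnt X n` is `|X ∩ [n]|` where `[n] = {1, ..., n}`. -/
noncomputable def cnt (X : Set ℕ) (n : ℕ) : ℕ := (X ∩ Set.Icc 1 n).ncard

/-- `des_{X,Y}(σ)`: number of `i` with `σ_i > σ_{i+1}`, `σ_i ∈ X` and `σ_{i+1} ∈ Y`
(positions and values of `Fin n` are identified with `{1, ..., n}` via `i ↦ i + 1`). -/
noncomputable def desCount (X Y : Set ℕ) (n : ℕ) (σ : Equiv.Perm (Fin n)) : ℕ :=
  {i : Fin n | ∃ h : (i : ℕ) + 1 < n,
    (σ ⟨(i : ℕ) + 1, h⟩ : ℕ) < (σ i : ℕ) ∧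
    ((σ i : ℕ) + 1) ∈ X ∧ ((σ ⟨(i : ℕ) + 1, h⟩ : ℕ) + 1) ∈ Y}.ncard

/-- `D_{n,s}^{X,Y}`: the number of permutations of `[n]` with exactly `s`
`(X,Y)`-descents. -/
noncomputable def D (X Y : Set ℕ) (n s : ℕ) : ℕ :=
  Nat.card {σ : Equiv.Perm (Fin n) | desCount X Y n σ = s}

/-!
Every permutation of `1, …, n + 1` arises exactly once by inserting `n + 1` into one of the
`n + 1` gaps of a permutation word of `1, …, n`; a missing neighbour at an end of the word is
represented by the sentinel `0`, at which all relations vanish. Inserting between `a` and `b`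
destroys the pair `(a, b)` and creates `(a, n + 1)` and `(n + 1, b)`. If the word has `j`
`(A, B)`-descents, then for `n + 1 ∉ A` the count drops by one at the `j` gaps that were descents
and stays put elsewhere, and for `n + 1 ∈ A` it rises by one at the `b_n - j` gaps whose right
neighbour lies in `B` but which were no descent. If it has `j` `(X, Y)`-adjacencies, the same two
patterns occur for `A = X ∪ Y`, the count rising at `x_n + y_n - j`, `y_n - j` or `x_n - j` gaps
according as `n + 1` lies in `X ∩ Y`, `X - Y` or `Y - X`, and the hypothesis on `B` turns each of
these into `b_n - j`. So the multisets of values of the two statistics over all permutations obey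
the same recursion.
-/

open List

namespace List

variable {α : Type*}

def pairCount (f : α → α → Bool) (l : List α) : ℕ :=
  (l.zip l.tail).countP fun q => f q.1 q.2

variable (f : α → α → Bool)

@[simp] theorem pairCount_nil : pairCount f [] = 0 := rfl

@[simp] theorem pairCount_singleton (a : α) : pairCount f [a] = 0 := rfl

theorem pairCount_cons_cons (a b : α) (l : List α) :
    pairCount f (a :: b :: l) = (f a b).toNat + pairCount f (b :: l) := by
  cases h : f a b <;> simp [pairCount, h, add_comm]

theorem pairCount_ofFn : ∀ {n : ℕ} (g : Fin n → α), pairCount f (ofFn g)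
    = (finRange n).countP fun i : Fin n => ∃ h : (i : ℕ) + 1 < n, f (g i) (g ⟨i + 1, h⟩)
  | 0, _ => rfl
  | 1, _ => rfl
  | n + 2, g => by
    have h : ofFn (fun i => g i.succ) = g 1 :: ofFn fun i => g i.succ.succ := ofFn_succ
    rw [ofFn_succ, h, pairCount_cons_cons, ← h, pairCount_ofFn, finRange_succ (n := n + 1),
      countP_cons, countP_map, add_comm]
    congr 1
    · exact countP_congr fun i _ => by simp [Fin.succ_mk]
    · cases h : f (g 0) (g 1) <;> simp [h]

theorem pairCount_cons_of_forall {a : α} (h : ∀ b, f a b = false) (l : List α) :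
    pairCount f (a :: l) = pairCount f l := by
  cases l <;> simp [pairCount_cons_cons, h]

theorem coe_map_ite {β : Type*} (s : List α) (p : α → Prop) [DecidablePred p] (u v : β) :
    ((s.map fun q => if p q then u else v : List β) : Multiset β)
      = Multiset.replicate (s.countP p) u + Multiset.replicate (s.length - s.countP p) v := by
  induction s with
  | nil => simp
  | cons a s ih =>
    have := s.countP_le_length (p := p)
    by_cases h : p a <;>
      simp [h, ← Multiset.cons_coe, ih, Nat.sub_add_comm this, Multiset.replicate_succ]

theorem countP_add_countP_eq_of_le (s : List α) (u v e : α → Bool)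
    (h : ∀ q ∈ s, (e q).toNat ≤ (u q).toNat + (v q).toNat ∧
      (u q).toNat + (v q).toNat ≤ (e q).toNat + 1) :
    s.countP (fun q => (u q).toNat + (v q).toNat = (e q).toNat + 1) + s.countP e
      = s.countP u + s.countP v := by
  induction s with
  | nil => rfl
  | cons a s ih =>
    have ha := h a mem_cons_self
    have ih := ih fun q hq => h q (mem_cons_of_mem a hq)
    have key : (if (u a).toNat + (v a).toNat = (e a).toNat + 1 then 1 else 0)
        + (if e a then 1 else 0) = (if u a then 1 else 0) + (if v a then 1 else 0) := by
      revert ha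
      cases u a <;> cases v a <;> cases e a <;> simp
    simp only [countP_cons, decide_eq_true_eq]
    omega

end List

/-- The neighbours of the `l.length + 1` insertion positions of `l`, when `a` stands left of `l`
and the sentinel `0` right of it. -/
def gaps (a : ℕ) (l : List ℕ) : List (ℕ × ℕ) := (a :: l).zip (l ++ [0])

@[simp] theorem gaps_nil (a : ℕ) : gaps a [] = [(a, 0)] := rfl

@[simp] theorem gaps_cons (a b : ℕ) (l : List ℕ) : gaps a (b :: l) = (a, b) :: gaps b l := rfl

section Insertion

variable {f : ℕ → ℕ → Bool}

theorem forall₂_permutations'Aux_gaps (hf0 : ∀ a, f a 0 = false) (m : ℕ) :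
    ∀ (a : ℕ) (l : List ℕ), Forall₂
      (fun w q => pairCount f (a :: w) + (f q.1 q.2).toNat
        = pairCount f (a :: l) + (f q.1 m).toNat + (f m q.2).toNat)
      (permutations'Aux m l) (gaps a l)
  | a, [] => by simp [permutations'Aux, pairCount_cons_cons, hf0]
  | a, b :: l => by
    refine .cons (by simp only [pairCount_cons_cons]; omega) ?_
    rw [forall₂_map_left_iff]
    refine (forall₂_permutations'Aux_gaps hf0 m b l).imp fun w q h => ?_
    simp only [pairCount_cons_cons] at h ⊢
    omega

theorem countP_gaps (hf0 : ∀ a, f a 0 = false) :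
    ∀ (a : ℕ) (l : List ℕ), (gaps a l).countP (fun q => f q.1 q.2) = pairCount f (a :: l)
  | a, [] => by simp [hf0]
  | a, b :: l => by
    rw [gaps_cons, countP_cons, countP_gaps hf0 b l, pairCount_cons_cons]
    cases f a b <;> simp [add_comm]

theorem countP_gaps_fst (p : ℕ → Bool) (a : ℕ) (l : List ℕ) :
    (gaps a l).countP (fun q => p q.1) = (a :: l).countP p := by
  have h := congrArg (countP p) (map_fst_zip (l₁ := a :: l) (l₂ := l ++ [0]) (by simp))
  rwa [countP_map] at h

theorem countP_gaps_snd (p : ℕ → Bool) (a : ℕ) (l : List ℕ) :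
    (gaps a l).countP (fun q => p q.2) = (l ++ [0]).countP p := by
  have h := congrArg (countP p) (map_snd_zip (l₁ := a :: l) (l₂ := l ++ [0]) (by simp))
  rwa [countP_map] at h

theorem length_gaps (a : ℕ) (l : List ℕ) : (gaps a l).length = l.length + 1 := by
  simp [gaps]

theorem lt_of_mem_gaps {m : ℕ} (hm : 0 < m) {l : List ℕ} (hl : ∀ a ∈ l, a < m) {q : ℕ × ℕ}
    (hq : q ∈ gaps 0 l) : q.1 < m ∧ q.2 < m := by
  obtain ⟨h1, h2⟩ := of_mem_zip hq
  rw [mem_cons] at h1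
  rw [mem_append, mem_singleton] at h2
  exact ⟨h1.elim (· ▸ hm) (hl _), h2.elim (hl _) (· ▸ hm)⟩

theorem map_pairCount_permutations'Aux (h0f : ∀ b, f 0 b = false) (hf0 : ∀ a, f a 0 = false)
    (m : ℕ) (l : List ℕ) :
    (permutations'Aux m l).map (pairCount f) = (gaps 0 l).map fun q =>
      pairCount f l + (f q.1 m).toNat + (f m q.2).toNat - (f q.1 q.2).toNat := by
  rw [← forall₂_eq_eq_eq, forall₂_map_left_iff, forall₂_map_right_iff]
  refine (forall₂_permutations'Aux_gaps hf0 m 0 l).imp fun w q h => ?_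
  rw [pairCount_cons_of_forall f h0f, pairCount_cons_of_forall f h0f] at h
  omega

def raiseProfile (N c j : ℕ) : Multiset ℕ :=
  Multiset.replicate c (j + 1) + Multiset.replicate (N - c) j

def lowerProfile (N j : ℕ) : Multiset ℕ :=
  Multiset.replicate j (j - 1) + Multiset.replicate (N - j) j

theorem coe_map_pairCount_permutations'Aux_of_raise (h0f : ∀ b, f 0 b = false)
    (hf0 : ∀ a, f a 0 = false) {m : ℕ} (hm : 0 < m) {l : List ℕ} (hl : ∀ a ∈ l, a < m)
    (hstep : ∀ a < m, ∀ b < m, (f a b).toNat ≤ (f a m).toNat + (f m b).toNat ∧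
      (f a m).toNat + (f m b).toNat ≤ (f a b).toNat + 1) :
    ((permutations'Aux m l).map (pairCount f) : Multiset ℕ) = raiseProfile (l.length + 1)
      (l.countP (f · m) + l.countP (f m ·) - pairCount f l) (pairCount f l) := by
  have hgap : ∀ q ∈ gaps 0 l, _ := fun q hq =>
    hstep q.1 (lt_of_mem_gaps hm hl hq).1 q.2 (lt_of_mem_gaps hm hl hq).2
  have hval : ∀ q ∈ gaps 0 l,
      pairCount f l + (f q.1 m).toNat + (f m q.2).toNat - (f q.1 q.2).toNat
        = if (f q.1 m).toNat + (f m q.2).toNat = (f q.1 q.2).toNat + 1 then pairCount f l + 1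
          else pairCount f l := fun q hq => by
    have := hgap q hq
    split_ifs <;> omega
  have hcount := countP_add_countP_eq_of_le _ _ _ _ hgap
  rw [countP_gaps hf0, countP_gaps_fst (f · m), countP_gaps_snd (f m ·),
    pairCount_cons_of_forall f h0f] at hcount
  simp only [countP_cons, countP_append, countP_nil, h0f, hf0, Bool.false_eq_true, if_false,
    add_zero] at hcount
  rw [map_pairCount_permutations'Aux h0f hf0, map_congr_left hval, coe_map_ite, raiseProfile,
    length_gaps]
  congr 2 <;> omega

theorem coe_map_pairCount_permutations'Aux_of_lower (h0f : ∀ b, f 0 b = false)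
    (hf0 : ∀ a, f a 0 = false) {m : ℕ} (hm : 0 < m) {l : List ℕ} (hl : ∀ a ∈ l, a < m)
    (hstep : ∀ a < m, f a m = false ∧ f m a = false) :
    ((permutations'Aux m l).map (pairCount f) : Multiset ℕ)
      = lowerProfile (l.length + 1) (pairCount f l) := by
  have hval : ∀ q ∈ gaps 0 l,
      pairCount f l + (f q.1 m).toNat + (f m q.2).toNat - (f q.1 q.2).toNat
        = if f q.1 q.2 then pairCount f l - 1 else pairCount f l := fun q hq => by
    obtain ⟨h1, h2⟩ := lt_of_mem_gaps hm hl hq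
    rw [(hstep _ h1).1, (hstep _ h2).2]
    cases f q.1 q.2 <;> rfl
  rw [map_pairCount_permutations'Aux h0f hf0, map_congr_left hval, coe_map_ite, lowerProfile,
    length_gaps]
  simp only [Bool.decide_eq_true]
  rw [countP_gaps hf0, pairCount_cons_of_forall f h0f]

end Insertion

def permWords (n : ℕ) : Multiset (List ℕ) := (range' 1 n).permutations

theorem mem_permWords {n : ℕ} {l : List ℕ} : l ∈ permWords n ↔ l ~ range' 1 n := by
  rw [permWords, Multiset.mem_coe, mem_permutations]

theorem permWords_succ (n : ℕ) :
    permWords (n + 1) = (permWords n).bind fun l => (permutations'Aux (n + 1) l : Multiset _) := by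
  have h : range' 1 (n + 1) ~ (n + 1) :: range' 1 n := by
    rw [range'_concat, one_mul, add_comm]
    exact perm_append_singleton _ _
  rw [permWords, permWords, Multiset.coe_bind, Multiset.coe_eq_coe]
  calc (range' 1 (n + 1)).permutations ~ ((n + 1) :: range' 1 n).permutations' :=
        h.permutations.trans (permutations_perm_permutations' _)
    _ = (range' 1 n).permutations'.flatMap (permutations'Aux (n + 1)) := rfl
    _ ~ (range' 1 n).permutations.flatMap (permutations'Aux (n + 1)) :=
        (permutations_perm_permutations' _).symm.flatMap_right _

def toWord {n : ℕ} (σ : Equiv.Perm (Fin n)) : List ℕ := ofFn fun i => (σ i : ℕ) + 1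

theorem toWord_injective (n : ℕ) : Function.Injective (toWord (n := n)) := by
  intro σ τ h
  ext i
  simpa using congrFun (ofFn_injective h) i

theorem toWord_perm {n : ℕ} (σ : Equiv.Perm (Fin n)) : toWord σ ~ range' 1 n := by
  refine (perm_ext_iff_of_nodup ?_ nodup_range').2 fun a => ?_
  · exact (nodup_ofFn.2 fun i j h => σ.injective (Fin.ext (by simpa using h)))
  · rw [toWord, mem_ofFn, mem_range'_1]
    constructor
    · rintro ⟨i, rfl⟩
      have := (σ i).isLt
      omega
    · rintro ⟨h1, h2⟩
      exact ⟨σ.symm ⟨a - 1, by omega⟩, by simp; omega⟩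

theorem map_toWord_univ (n : ℕ) :
    (Finset.univ : Finset (Equiv.Perm (Fin n))).val.map toWord = permWords n := by
  have hnodup : (Finset.univ.val.map (toWord (n := n))).Nodup :=
    Finset.univ.nodup.map (toWord_injective n)
  refine Multiset.eq_of_le_of_card_le ((Multiset.le_iff_subset hnodup).2 fun l hl => ?_) ?_
  · obtain ⟨σ, -, rfl⟩ := Multiset.mem_map.1 hl
    exact mem_permWords.2 (toWord_perm σ)
  · simp [permWords, length_permutations, Fintype.card_perm]

theorem natCard_setOf_toWord (g : List ℕ → ℕ) (n k : ℕ) :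
    Nat.card {σ : Equiv.Perm (Fin n) | g (toWord σ) = k} = ((permWords n).map g).count k := by
  rw [← map_toWord_univ, Multiset.map_map, Multiset.count_map, Nat.card_eq_fintype_card,
    Fintype.card_subtype, Finset.card, Finset.filter_val]
  simp [eq_comm]

theorem Set.ncard_setOf_fin_eq_countP {n : ℕ} (p : Fin n → Prop) [DecidablePred p] :
    {i | p i}.ncard = (finRange n).countP p := by
  rw [Set.ncard_eq_toFinset_card', Set.toFinset_ofPred, Finset.card, Finset.filter_val,
    ← Multiset.countP_eq_card_filter, Fin.univ_def, Multiset.coe_countP]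

theorem cnt_eq_countP (S : Set ℕ) [DecidablePred (· ∈ S)] (n : ℕ) :
    cnt S n = (range' 1 n).countP (· ∈ S) := by
  have h : S ∩ Set.Icc 1 n = ↑((Finset.Icc 1 n).filter (· ∈ S)) := by
    ext; simp; tauto
  rw [cnt, h, Set.ncard_coe_finset, Finset.card, Finset.filter_val,
    ← Multiset.countP_eq_card_filter, Nat.Icc_eq_range']
  simp

theorem cnt_zero (S : Set ℕ) : cnt S 0 = 0 := by
  simp [cnt]

open Classical in
noncomputable def desRel (X Y : Set ℕ) (a b : ℕ) : Bool := decide (b < a ∧ a ∈ X ∧ b ∈ Y)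

open Classical in
noncomputable def adjRel (X Y : Set ℕ) (a b : ℕ) : Bool := decide (a ∈ X ∧ b ∈ Y)

theorem desCount_eq_pairCount (X Y : Set ℕ) (n : ℕ) (σ : Equiv.Perm (Fin n)) :
    desCount X Y n σ = pairCount (desRel X Y) (toWord σ) := by
  classical
  rw [desCount, toWord, pairCount_ofFn, ← Set.ncard_setOf_fin_eq_countP]
  simp [desRel]

theorem adjCount_eq_pairCount (X Y : Set ℕ) (n : ℕ) (σ : Equiv.Perm (Fin n)) :
    adjCount X Y n σ = pairCount (adjRel X Y) (toWord σ) := by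
  classical
  rw [adjCount, toWord, pairCount_ofFn, ← Set.ncard_setOf_fin_eq_countP]
  simp [adjRel]

open Classical in
noncomputable def insertionStep (A B : Set ℕ) (n j : ℕ) : Multiset ℕ :=
  if n + 1 ∈ A then raiseProfile (n + 1) (cnt B n - j) j else lowerProfile (n + 1) j

section PermWords

variable {n : ℕ} {l : List ℕ}

theorem lt_add_one_of_perm_range' (hl : l ~ range' 1 n) : ∀ a ∈ l, a < n + 1 := fun a ha => by
  have := mem_range'_1.1 (hl.subset ha)
  omega

theorem countP_eq_cnt_of_perm (hl : l ~ range' 1 n) {S : Set ℕ} {p : ℕ → Bool}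
    (hp : ∀ a ∈ l, p a ↔ a ∈ S) : l.countP p = cnt S n := by
  classical
  rw [cnt_eq_countP, ← hl.countP_eq]
  exact countP_congr fun a ha => by simpa using hp a ha

theorem coe_map_pairCount_desRel {A B : Set ℕ} (hB : 0 ∉ B) (hl : l ~ range' 1 n) :
    ((permutations'Aux (n + 1) l).map (pairCount (desRel A B)) : Multiset ℕ)
      = insertionStep A B n (pairCount (desRel A B) l) := by
  have hlt := lt_add_one_of_perm_range' hl
  have h0f : ∀ b, desRel A B 0 b = false := by simp [desRel]
  have hf0 : ∀ a, desRel A B a 0 = false := by simp [desRel, hB]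
  have hlen : l.length = n := by simp [hl.length_eq]
  unfold insertionStep
  split_ifs with hA
  · rw [coe_map_pairCount_permutations'Aux_of_raise h0f hf0 n.succ_pos hlt, hlen,
      countP_eq_zero.2 fun a ha => by simp [desRel, (hlt a ha).not_gt],
      countP_eq_cnt_of_perm hl (S := B) fun b hb => by simp [desRel, hA, hlt b hb], zero_add]
    intro a ha b hb
    by_cases hb' : b ∈ B <;> simp [desRel, hA, hb, hb', ha.not_gt, Bool.toNat_le]
  · rw [coe_map_pairCount_permutations'Aux_of_lower h0f hf0 n.succ_pos hlt, hlen]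
    intro a ha
    simp [desRel, hA, ha.not_gt]

theorem coe_map_pairCount_adjRel {X Y B : Set ℕ} (hX : 0 ∉ X) (hY : 0 ∉ Y)
    (hl : l ~ range' 1 n)
    (hXY : n + 1 ∈ X ∩ Y → cnt B n = cnt X n + cnt Y n)
    (hXnY : n + 1 ∈ X \ Y → cnt B n = cnt Y n)
    (hYnX : n + 1 ∈ Y \ X → cnt B n = cnt X n) :
    ((permutations'Aux (n + 1) l).map (pairCount (adjRel X Y)) : Multiset ℕ)
      = insertionStep (X ∪ Y) B n (pairCount (adjRel X Y) l) := by
  have hlt := lt_add_one_of_perm_range' hl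
  have h0f : ∀ b, adjRel X Y 0 b = false := by simp [adjRel, hX]
  have hf0 : ∀ a, adjRel X Y a 0 = false := by simp [adjRel, hY]
  have hlen : l.length = n := by simp [hl.length_eq]
  unfold insertionStep
  split_ifs with hA
  · rw [coe_map_pairCount_permutations'Aux_of_raise h0f hf0 n.succ_pos hlt, hlen]
    · congr 2
      by_cases hx : n + 1 ∈ X <;> by_cases hy : n + 1 ∈ Y
      · rw [hXY ⟨hx, hy⟩, countP_eq_cnt_of_perm hl (S := X) (by simp [adjRel, hy]),
          countP_eq_cnt_of_perm hl (S := Y) (by simp [adjRel, hx])]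
      · rw [hXnY ⟨hx, hy⟩, countP_eq_zero.2 (by simp [adjRel, hy]),
          countP_eq_cnt_of_perm hl (S := Y) (by simp [adjRel, hx]), zero_add]
      · rw [hYnX ⟨hy, hx⟩, countP_eq_cnt_of_perm hl (S := X) (by simp [adjRel, hy]),
          countP_eq_zero.2 (by simp [adjRel, hx]), add_zero]
      · exact absurd hA (by simp [hx, hy])
    · intro a _ b _
      by_cases ha : a ∈ X <;> by_cases hb : b ∈ Y <;> by_cases hx : n + 1 ∈ X <;>
        by_cases hy : n + 1 ∈ Y <;> simp_all [adjRel]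
  · rw [coe_map_pairCount_permutations'Aux_of_lower h0f hf0 n.succ_pos hlt, hlen]
    intro a _
    simp_all [adjRel]

end PermWords

theorem map_pairCount_permWords_succ {f : ℕ → ℕ → Bool} {n : ℕ} (step : ℕ → Multiset ℕ)
    (h : ∀ l ∈ permWords n,
      ((permutations'Aux (n + 1) l).map (pairCount f) : Multiset ℕ) = step (pairCount f l)) :
    (permWords (n + 1)).map (pairCount f) = ((permWords n).map (pairCount f)).bind step := by
  rw [permWords_succ, Multiset.map_bind, Multiset.bind_map]
  exact Multiset.bind_congr fun l hl => by rw [Multiset.map_coe, h l hl]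

theorem map_pairCount_desRel_eq_adjRel {X Y B : Set ℕ} (hX : 0 ∉ X) (hY : 0 ∉ Y) (hB : 0 ∉ B)
    (hcond : ∀ n : ℕ, 1 ≤ n →
      (n + 1 ∈ X ∩ Y → cnt B n = cnt X n + cnt Y n) ∧
      (n + 1 ∈ X \ Y → cnt B n = cnt Y n) ∧
      (n + 1 ∈ Y \ X → cnt B n = cnt X n)) :
    ∀ n, (permWords n).map (pairCount (desRel (X ∪ Y) B))
      = (permWords n).map (pairCount (adjRel X Y))
  | 0 => by simp [permWords]
  | n + 1 => by
    obtain ⟨hXY, hXnY, hYnX⟩ := n.eq_zero_or_pos.elim (fun h => by simp [h, cnt_zero]) (hcond n)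
    rw [map_pairCount_permWords_succ _ fun l hl => coe_map_pairCount_desRel hB (mem_permWords.1 hl),
      map_pairCount_permWords_succ _ fun l hl =>
        coe_map_pairCount_adjRel hX hY (mem_permWords.1 hl) hXY hXnY hYnX,
      map_pairCount_desRel_eq_adjRel hX hY hB hcond n]

theorem D_eq_A_general (X Y B : Set ℕ) (hX : 0 ∉ X) (hY : 0 ∉ Y) (hB : 0 ∉ B)
    (hcond : ∀ n : ℕ, 1 ≤ n →
      (n + 1 ∈ X ∩ Y → cnt B n = cnt X n + cnt Y n) ∧
      (n + 1 ∈ X \ Y → cnt B n = cnt Y n) ∧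
      (n + 1 ∈ Y \ X → cnt B n = cnt X n))
    (n : ℕ) (k : ℕ) :
    D (X ∪ Y) B n k = A X Y n k := by
  simp only [D, A, desCount_eq_pairCount, adjCount_eq_pairCount]
  rw [natCard_setOf_toWord, natCard_setOf_toWord, map_pairCount_desRel_eq_adjRel hX hY hB hcond]

/-- Theorem 6: if `A = X ∪ Y` and `B` satisfies `b_n = x_n + y_n` if `n+1 ∈ X ∩ Y`,
`b_n = y_n` if `n+1 ∈ X - Y`, and `b_n = x_n` if `n+1 ∈ Y - X`, then
`D_{n,k}^{A,B} = A_{n,k}^{X,Y}`. -/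
theorem D_eq_A (X Y B : Set ℕ) (hX : 0 ∉ X) (hY : 0 ∉ Y) (hB : 0 ∉ B)
    (hcond : ∀ n : ℕ, 1 ≤ n →
      (n + 1 ∈ X ∩ Y → cnt B n = cnt X n + cnt Y n) ∧
      (n + 1 ∈ X \ Y → cnt B n = cnt Y n) ∧
      (n + 1 ∈ Y \ X → cnt B n = cnt X n))
    (n : ℕ) (hn : 1 ≤ n) (k : ℕ) :
    D (X ∪ Y) B n k = A X Y n k :=
  D_eq_A_general X Y B hX hY hB hcond n k
end

section
/- For all subsets X, Y of the positive integers and all n ≥ 1 and k ≥ 0, the number of permutations of [n] with exactly k (X,Y)-descents equals the number of permutations of [n] with exactly k (Y,X)-excedances, i.e. D_{n,k}^{X,Y} = E_{n,k}^{Y,X}. -/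
/-- `exc_{X,Y}(σ)`: number of `i` with `σ_i > i`, `i ∈ X` and `σ_i ∈ Y`
(positions and values of `Fin n` are identified with `{1, ..., n}` via `i ↦ i + 1`). -/
noncomputable def excCount (X Y : Set ℕ) (n : ℕ) (σ : Equiv.Perm (Fin n)) : ℕ :=
  {i : Fin n | (i : ℕ) < (σ i : ℕ) ∧ ((i : ℕ) + 1) ∈ X ∧ ((σ i : ℕ) + 1) ∈ Y}.ncard

/-- `E_{n,k}^{X,Y}`: the number of permutations of `[n]` with exactly `k`
`(X,Y)`-excedances. -/
noncomputable def E (X Y : Set ℕ) (n k : ℕ) : ℕ :=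
  Nat.card {σ : Equiv.Perm (Fin n) | excCount X Y n σ = k}

open Finset Equiv

namespace Foata

variable {n : ℕ}

/-- Either `m < n` and `w` has a left-to-right maximum at position `m`, or `m ≥ n`. The blocks of
`w` are the maximal intervals `[m, m')` between consecutive block starts. -/
def IsBlockStart (w : Perm (Fin n)) (m : ℕ) : Prop :=
  ∀ h : m < n, ∀ j : Fin n, (j : ℕ) < m → w j < w ⟨m, h⟩

lemma lt_of_not_isBlockStart {w : Perm (Fin n)} {m : ℕ} (h : ¬ IsBlockStart w m) : m < n :=
  (not_forall.mp h).fst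

lemma isBlockStart_succ_iff (w : Perm (Fin n)) (i : Fin n) :
    IsBlockStart w (i + 1) ↔ ∀ h : (i : ℕ) + 1 < n, ∀ v ∈ (Iic i).image w, v < w ⟨i + 1, h⟩ := by
  simp only [IsBlockStart, forall_mem_image, mem_Iic, Fin.le_def, Nat.lt_succ_iff]

def prefixMax (w : Perm (Fin n)) (i : Fin n) : Fin n :=
  ((Iic i).image w).max' ⟨w i, mem_image_of_mem w (mem_Iic.mpr le_rfl)⟩

lemma prefixMax_mem (w : Perm (Fin n)) (i : Fin n) : prefixMax w i ∈ (Iic i).image w :=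
  max'_mem _ _

lemma symm_prefixMax_le (w : Perm (Fin n)) (i : Fin n) : w.symm (prefixMax w i) ≤ i := by
  obtain ⟨j, hj, hjv⟩ := mem_image.mp (prefixMax_mem w i)
  rw [← hjv, symm_apply_apply]
  exact mem_Iic.mp hj

lemma le_prefixMax (w : Perm (Fin n)) {i j : Fin n} (h : j ≤ i) : w j ≤ prefixMax w i :=
  le_max' _ _ (mem_image_of_mem w (mem_Iic.mpr h))

lemma isBlockStart_symm_prefixMax (w : Perm (Fin n)) (i : Fin n) :
    IsBlockStart w (w.symm (prefixMax w i)) := by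
  intro _ j hj
  have hji : j ≤ i := (Fin.lt_def.mpr hj).le.trans (symm_prefixMax_le w i)
  rw [Fin.eta, apply_symm_apply]
  refine (le_prefixMax w hji).lt_of_ne fun he => ?_
  exact hj.ne (congrArg Fin.val (w.injective (he.trans (w.apply_symm_apply _).symm)))

lemma image_Iic_eq_compl (w : Perm (Fin n)) (i : Fin n) :
    (Iic i).image w = ((Ioi i).image w)ᶜ := by
  ext v
  obtain ⟨j, rfl⟩ := w.surjective v
  simp

lemma image_Iic_congr {w w' : Perm (Fin n)} {i : Fin n} (hw : ∀ j, i < j → w j = w' j) :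
    (Iic i).image w = (Iic i).image w' := by
  rw [image_Iic_eq_compl, image_Iic_eq_compl, image_congr fun j hj => hw j (mem_Ioi.mp hj)]

lemma prefixMax_congr {w w' : Perm (Fin n)} {i : Fin n} (hw : ∀ j, i < j → w j = w' j) :
    prefixMax w i = prefixMax w' i := by
  simp only [prefixMax, image_Iic_congr hw]

open Classical in
/-- The cyclic shift inside each block of `w`: the block containing `i` starts at the position
of `prefixMax w i`, and ends at `i` exactly when `i + 1` is a block start. -/
noncomputable def blockShift (w : Perm (Fin n)) (i : Fin n) : Fin n :=
  if h : IsBlockStart w (i + 1) then w.symm (prefixMax w i)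
  else ⟨i + 1, lt_of_not_isBlockStart h⟩

lemma blockShift_of_isBlockStart {w : Perm (Fin n)} {i : Fin n} (h : IsBlockStart w (i + 1)) :
    blockShift w i = w.symm (prefixMax w i) :=
  dif_pos h

lemma blockShift_of_not_isBlockStart {w : Perm (Fin n)} {i : Fin n}
    (h : ¬ IsBlockStart w (i + 1)) : blockShift w i = ⟨i + 1, lt_of_not_isBlockStart h⟩ :=
  dif_neg h

lemma prefixMax_lt_prefixMax {w : Perm (Fin n)} {a b : Fin n} (hab : a < b)
    (ha : IsBlockStart w (a + 1)) : prefixMax w a < prefixMax w b := by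
  have hlt : (a : ℕ) + 1 < n := Nat.lt_of_le_of_lt hab b.isLt
  calc prefixMax w a < w ⟨a + 1, hlt⟩ :=
        (isBlockStart_succ_iff w a).mp ha hlt _ (prefixMax_mem w a)
    _ ≤ prefixMax w b := le_prefixMax w hab

lemma blockShift_injective (w : Perm (Fin n)) : Function.Injective (blockShift w) := by
  intro a b hab
  by_cases ha : IsBlockStart w (a + 1) <;> by_cases hb : IsBlockStart w (b + 1)
  · rw [blockShift_of_isBlockStart ha, blockShift_of_isBlockStart hb] at hab
    have hmax := w.symm.injective hab
    by_contra hne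
    rcases lt_or_gt_of_ne hne with h | h
    · exact (prefixMax_lt_prefixMax h ha).ne hmax
    · exact (prefixMax_lt_prefixMax h hb).ne' hmax
  · rw [blockShift_of_isBlockStart ha, blockShift_of_not_isBlockStart hb] at hab
    have hstart := isBlockStart_symm_prefixMax w a
    rw [hab] at hstart
    exact absurd hstart hb
  · rw [blockShift_of_not_isBlockStart ha, blockShift_of_isBlockStart hb] at hab
    have hstart := isBlockStart_symm_prefixMax w b
    rw [← hab] at hstart
    exact absurd hstart ha
  · rw [blockShift_of_not_isBlockStart ha, blockShift_of_not_isBlockStart hb] at hab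
    exact Fin.ext (Nat.succ_injective (congrArg Fin.val hab))

noncomputable def phi (w : Perm (Fin n)) : Perm (Fin n) :=
  w * Equiv.ofBijective (blockShift w) (Finite.injective_iff_bijective.mp (blockShift_injective w))
    * w⁻¹

lemma phi_apply_apply (w : Perm (Fin n)) (i : Fin n) : phi w (w i) = w (blockShift w i) := by
  simp [phi]

lemma phi_apply_apply_of_isBlockStart {w : Perm (Fin n)} {i : Fin n}
    (h : IsBlockStart w (i + 1)) : phi w (w i) = prefixMax w i := by
  rw [phi_apply_apply, blockShift_of_isBlockStart h, apply_symm_apply]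

lemma phi_apply_apply_of_not_isBlockStart {w : Perm (Fin n)} {i : Fin n}
    (h : ¬ IsBlockStart w (i + 1)) : phi w (w i) = w ⟨i + 1, lt_of_not_isBlockStart h⟩ := by
  rw [phi_apply_apply, blockShift_of_not_isBlockStart h]

lemma not_isBlockStart_succ {w : Perm (Fin n)} {i : Fin n} (h : (i : ℕ) + 1 < n)
    (hlt : w ⟨i + 1, h⟩ < w i) : ¬ IsBlockStart w (i + 1) :=
  fun hs => (hs h i (Nat.lt_succ_self _)).asymm hlt

lemma phi_apply_apply_of_lt {w : Perm (Fin n)} {i : Fin n} (h : (i : ℕ) + 1 < n)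
    (hlt : w ⟨i + 1, h⟩ < w i) : phi w (w i) = w ⟨i + 1, h⟩ :=
  phi_apply_apply_of_not_isBlockStart (not_isBlockStart_succ h hlt)

lemma phi_apply_apply_lt_iff (w : Perm (Fin n)) (i : Fin n) :
    phi w (w i) < w i ↔ ∃ h : (i : ℕ) + 1 < n, w ⟨i + 1, h⟩ < w i := by
  by_cases hs : IsBlockStart w (i + 1)
  · rw [phi_apply_apply_of_isBlockStart hs]
    simp only [not_lt.mpr (le_prefixMax w le_rfl), false_iff, not_exists, not_lt]
    exact fun h => (hs h i (Nat.lt_succ_self _)).le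
  · rw [phi_apply_apply_of_not_isBlockStart hs]
    exact ⟨fun hlt => ⟨_, hlt⟩, fun ⟨_, hlt⟩ => hlt⟩

lemma desCount_eq_ncard_phi (X Y : Set ℕ) (w : Perm (Fin n)) :
    desCount X Y n w = {m | phi w m < m ∧ (m : ℕ) + 1 ∈ X ∧ (phi w m : ℕ) + 1 ∈ Y}.ncard := by
  rw [desCount, ← Set.ncard_image_of_injective _ w.injective]
  congr 1
  ext m
  obtain ⟨i, rfl⟩ := w.surjective m
  simp only [Set.mem_image, Set.mem_ofPred_eq, w.injective.eq_iff, exists_eq_right]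
  constructor
  · rintro ⟨h, hlt, hX, hY⟩
    rw [phi_apply_apply_of_lt h hlt]
    exact ⟨hlt, hX, hY⟩
  · rintro ⟨hlt, hX, hY⟩
    obtain ⟨h, hdes⟩ := (phi_apply_apply_lt_iff w i).mp hlt
    rw [phi_apply_apply_of_lt h hdes] at hY
    exact ⟨h, hdes, hX, hY⟩

lemma excCount_inv (X Y : Set ℕ) (σ : Perm (Fin n)) :
    excCount Y X n σ⁻¹ = {m | σ m < m ∧ (m : ℕ) + 1 ∈ X ∧ (σ m : ℕ) + 1 ∈ Y}.ncard := by
  rw [excCount, ← Set.ncard_image_of_injective {m | σ m < m ∧ _} σ.injective]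
  congr 1
  ext j
  obtain ⟨m, rfl⟩ := σ.surjective j
  simp only [Set.mem_image, Set.mem_ofPred_eq, σ.injective.eq_iff, exists_eq_right,
    Perm.coe_inv, symm_apply_apply]
  exact ⟨fun ⟨hlt, hY, hX⟩ => ⟨hlt, hX, hY⟩, fun ⟨hlt, hX, hY⟩ => ⟨hlt, hY, hX⟩⟩

lemma desCount_eq_excCount_phi_inv (X Y : Set ℕ) (w : Perm (Fin n)) :
    desCount X Y n w = excCount Y X n (phi w)⁻¹ := by
  rw [desCount_eq_ncard_phi, excCount_inv]

lemma phi_apply_apply_congr {w w' : Perm (Fin n)} {i : Fin n} (hw : ∀ j, i < j → w j = w' j) :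
    phi w (w i) = phi w' (w' i) := by
  have hnext (h : (i : ℕ) + 1 < n) : w ⟨i + 1, h⟩ = w' ⟨i + 1, h⟩ := hw _ (Nat.lt_succ_self _)
  have hstart : IsBlockStart w (i + 1) ↔ IsBlockStart w' (i + 1) := by
    simp only [isBlockStart_succ_iff, image_Iic_congr hw, hnext]
  by_cases h : IsBlockStart w (i + 1)
  · rw [phi_apply_apply_of_isBlockStart h, phi_apply_apply_of_isBlockStart (hstart.mp h),
      prefixMax_congr hw]
  · rw [phi_apply_apply_of_not_isBlockStart h,
      phi_apply_apply_of_not_isBlockStart (hstart.not.mp h), hnext]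

theorem phi_bijective : Function.Bijective (phi (n := n)) := by
  refine Finite.injective_iff_bijective.mp fun w w' hphi => Equiv.ext fun i => ?_
  induction i using WellFoundedGT.induction with
  | _ i ih => exact (phi w').injective (hphi ▸ phi_apply_apply_congr ih)

end Foata

theorem D_eq_E_general (X Y : Set ℕ) (n : ℕ) (k : ℕ) :
    D X Y n k = E Y X n k := by
  let e := (Equiv.ofBijective _ Foata.phi_bijective).trans (Equiv.inv (Perm (Fin n)))
  exact Nat.card_congr (e.subtypeEquiv fun w => by
    simp [e, Foata.desCount_eq_excCount_phi_inv])

/-- Foata's first transformation: `D_{n,k}^{X,Y} = E_{n,k}^{Y,X}` for all `X, Y, n, k`. -/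
theorem D_eq_E (X Y : Set ℕ) (hX : 0 ∉ X) (hY : 0 ∉ Y) (n : ℕ) (hn : 1 ≤ n) (k : ℕ) :
    D X Y n k = E Y X n k :=
  D_eq_E_general X Y n k
end

section
/- Let X and Y be subsets of the positive integers with X ∪ Y = ℕ and X ∩ Y = ∅, and let n ≥ 1. Then Γ_{n,s}^{X,Y} = 0 unless s = 2k + y_n − x_n for some integer k ≥ 0, and for every k with 0 ≤ k ≤ x_n and x_n − k ≤ y_n, Γ_{n, 2k + y_n − x_n}^{X,Y} = (x_n)! · (y_n)! · C(x_n, k) · C(y_n, x_n − k), where C(a,b) denotes the binomial coefficient. -/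
/-- `γ_{X,Y}(σ) = |{i ∈ X : σ_i ∈ X} ∪ {i ∈ Y : σ_i ∈ Y}|`
(positions and values of `Fin n` are identified with `{1, ..., n}` via `i ↦ i + 1`). -/
noncomputable def gammaCount (X Y : Set ℕ) (n : ℕ) (σ : Equiv.Perm (Fin n)) : ℕ :=
  ({i : Fin n | ((i : ℕ) + 1) ∈ X ∧ ((σ i : ℕ) + 1) ∈ X} ∪
    {i : Fin n | ((i : ℕ) + 1) ∈ Y ∧ ((σ i : ℕ) + 1) ∈ Y}).ncard

/-- `Γ_{n,s}^{X,Y}`: the number of permutations of `[n]` with `γ_{X,Y}(σ) = s`. -/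
noncomputable def Gam (X Y : Set ℕ) (n s : ℕ) : ℕ :=
  Nat.card {σ : Equiv.Perm (Fin n) | gammaCount X Y n σ = s}

/-! Put `A = {i : i + 1 ∈ X}`; by the hypotheses its complement is `{i : i + 1 ∈ Y}`, so
`γ(σ) = #{i : i ∈ A ↔ σ i ∈ A}`. Writing `k = #{i ∈ A : σ i ∈ A}`, exactly `x_n - k`
positions outside `A` are sent into `A`, so `γ(σ) = k + (y_n - (x_n - k)) = 2k + y_n - x_n`.
To count the permutations with a given `k`, group them by `U = σ⁻¹(A)`: the admissible `U`
meet `A` in `k` points and `Aᶜ` in `x_n - k` points, giving `C(x_n, k) C(y_n, x_n - k)`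
choices, and each fibre is a coset of the stabiliser of `A`, of size `x_n! y_n!`. -/

open Finset Equiv Nat

section

variable {α : Type*} [Fintype α] [DecidableEq α]

namespace Finset

theorem card_filter_inter_eq_and_compl_inter_eq (A : Finset α) (k j : ℕ) :
    #{U : Finset α | #(A ∩ U) = k ∧ #(Aᶜ ∩ U) = j} = (#A).choose k * (#Aᶜ).choose j := by
  rw [← card_powersetCard, ← card_powersetCard, ← card_product]
  have union_inter {S T : Finset α} (hS : S ⊆ A) (hT : T ⊆ Aᶜ) :
      A ∩ (S ∪ T) = S ∧ Aᶜ ∩ (S ∪ T) = T := by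
    constructor <;> ext i <;> have := @hS i <;> have := @hT i <;> simp at * <;> tauto
  refine card_nbij' (fun U => (A ∩ U, Aᶜ ∩ U)) (fun p => p.1 ∪ p.2) ?_ ?_ ?_ ?_
  · intro U hU
    simp_all [mem_powersetCard]
  · rintro ⟨S, T⟩ h
    simp only [coe_product, Set.mem_prod, mem_coe, mem_powersetCard] at h
    simp [union_inter h.1.1 h.2.1, h.1.2, h.2.2]
  · intro U _
    ext i
    by_cases hi : i ∈ A <;> simp [hi]
  · rintro ⟨S, T⟩ h
    simp only [coe_product, Set.mem_prod, mem_coe, mem_powersetCard] at h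
    simp [union_inter h.1.1 h.2.1]

theorem card_inter_add_card_compl_inter (A U : Finset α) :
    #(A ∩ U) + #(Aᶜ ∩ U) = #U := by
  rw [← card_union_of_disjoint (disjoint_compl_right.mono inter_subset_left inter_subset_left),
    ← union_inter_distrib_right, union_compl, univ_inter]

end Finset

namespace Equiv.Perm

theorem exists_mem_iff_of_card_eq {A U : Finset α} (h : #U = #A) :
    ∃ τ : Perm α, ∀ i, τ i ∈ A ↔ i ∈ U := by
  have hin : Fintype.card {i // i ∈ U} = Fintype.card {i // i ∈ A} := by simpa using h
  let e := Fintype.equivOfCardEq hin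
  let e' := Fintype.equivOfCardEq (Fintype.card_compl_eq_card_compl _ _ hin)
  refine ⟨e.subtypeCongr e', fun i => ?_⟩
  by_cases hi : i ∈ U
  · simp [Equiv.subtypeCongr, hi, (e ⟨i, hi⟩).2]
  · simp [Equiv.subtypeCongr, hi, (e' ⟨i, hi⟩).2]

theorem card_mem_comp_eq_mem (A : Finset α) :
    Fintype.card {g : Perm α // (· ∈ A) ∘ g = (· ∈ A)} = (#A)! * (#Aᶜ)! := by
  classical
  rw [DomMulAct.stabilizer_card, Fintype.prod_Prop]
  simp [Fintype.card_subtype, filter_notMem_eq_sdiff, ← compl_eq_univ_sdiff]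

theorem card_filter_forall_apply_mem_iff {A U : Finset α} (h : #U = #A) :
    #{σ : Perm α | ∀ i, σ i ∈ A ↔ i ∈ U} = (#A)! * (#Aᶜ)! := by
  obtain ⟨τ, hτ⟩ := exists_mem_iff_of_card_eq h
  rw [← Fintype.card_subtype, ← card_mem_comp_eq_mem A]
  refine Fintype.card_congr ((Equiv.mulRight τ⁻¹).subtypeEquiv fun σ => ?_)
  simp only [funext_iff, Function.comp_apply, eq_iff_iff, coe_mulRight, Perm.mul_apply]
  conv_rhs => rw [← τ.forall_congr_right]
  simp [hτ]

theorem card_filter_apply_mem (σ : Perm α) (A : Finset α) : #{i | σ i ∈ A} = #A :=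
  card_equiv σ (by simp)

theorem card_filter_mem_iff_apply_mem_add (σ : Perm α) (A : Finset α) :
    #{i | i ∈ A ↔ σ i ∈ A} + #A = 2 * #{i ∈ A | σ i ∈ A} + #Aᶜ := by
  -- After `#A = #{i | σ i ∈ A}` this sums the pointwise `[a ↔ b] + [b] = 2 [a ∧ b] + [¬a]`.
  conv_lhs => rw [← card_filter_apply_mem σ A]
  have hA : {i ∈ A | σ i ∈ A} = ({i | i ∈ A ∧ σ i ∈ A} : Finset α) := by ext; simp
  have hAc : Aᶜ = ({i | i ∉ A} : Finset α) := by ext; simp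
  rw [hA, hAc]
  simp only [card_filter, mul_sum, ← sum_add_distrib]
  refine sum_congr rfl fun i _ => ?_
  by_cases hi : i ∈ A <;> by_cases hσi : σ i ∈ A <;> simp [hi, hσi]

theorem card_filter_card_filter_apply_mem_eq (A : Finset α) (k : ℕ) :
    #{σ : Perm α | #{i ∈ A | σ i ∈ A} = k} =
      (#A)! * (#Aᶜ)! * ((#A).choose k * (#Aᶜ).choose (#A - k)) := by
  have inter_eq (σ : Perm α) : A ∩ ({i | σ i ∈ A} : Finset α) = {i ∈ A | σ i ∈ A} := by
    ext; simp
  set t : Finset (Finset α) := {U | #(A ∩ U) = k ∧ #(Aᶜ ∩ U) = #A - k}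
  have maps : ∀ σ ∈ ({σ : Perm α | #{i ∈ A | σ i ∈ A} = k} : Finset _),
      ({i | σ i ∈ A} : Finset α) ∈ t := by
    intro σ hσ
    simp only [mem_filter, mem_univ, true_and, t] at hσ ⊢
    have := card_inter_add_card_compl_inter A ({i | σ i ∈ A} : Finset α)
    rw [card_filter_apply_mem, inter_eq, hσ] at this
    exact ⟨by rw [inter_eq, hσ], by omega⟩
  have fiber : ∀ U ∈ t, #{σ ∈ ({σ : Perm α | #{i ∈ A | σ i ∈ A} = k} : Finset _) |
      ({i | σ i ∈ A} : Finset α) = U} = (#A)! * (#Aᶜ)! := by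
    intro U hU
    simp only [mem_filter, mem_univ, true_and, t] at hU
    have hUA : #U = #A := by
      have := card_inter_add_card_compl_inter A U
      have := card_le_card (inter_subset_left : A ∩ U ⊆ A)
      omega
    rw [← card_filter_forall_apply_mem_iff hUA, filter_filter]
    refine congrArg card (filter_congr fun σ _ => ?_)
    constructor
    · rintro ⟨-, rfl⟩ i
      simp
    · intro h
      have hσU : ({i | σ i ∈ A} : Finset α) = U := by ext i; simp [h]
      exact ⟨by rw [← inter_eq, hσU, hU.1], hσU⟩
  rw [card_eq_sum_card_fiberwise maps, sum_const_nat fiber,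
    card_filter_inter_eq_and_compl_inter_eq, mul_comm]

end Equiv.Perm

end

theorem cnt_eq_card {Z : Set ℕ} {n : ℕ} {A : Finset (Fin n)}
    (hA : ∀ i : Fin n, i ∈ A ↔ (i : ℕ) + 1 ∈ Z) : cnt Z n = #A := by
  rw [cnt, ← Set.ncard_coe_finset]
  symm
  refine Set.ncard_congr (fun i _ => (i : ℕ) + 1) ?_ ?_ ?_
  · intro i hi
    exact ⟨(hA i).1 hi, by simp, by omega⟩
  · intro i j _ _ h
    exact Fin.ext (by simpa using h)
  · rintro m ⟨hm, h1, h2⟩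
    refine ⟨⟨m - 1, by omega⟩, (hA _).2 ?_, by simp; omega⟩
    simpa [Nat.sub_add_cancel h1] using hm

theorem gammaCount_eq_card {X Y : Set ℕ} (hY : ∀ m, 1 ≤ m → (m ∈ Y ↔ m ∉ X)) {n : ℕ}
    {A : Finset (Fin n)} (hA : ∀ i : Fin n, i ∈ A ↔ (i : ℕ) + 1 ∈ X) (σ : Perm (Fin n)) :
    gammaCount X Y n σ = #{i | i ∈ A ↔ σ i ∈ A} := by
  rw [gammaCount, ← Set.ncard_coe_finset]
  congr 1
  ext i
  simp [hA, hY _ (Nat.succ_pos _)]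
  tauto

theorem Gam_eq_card (X Y : Set ℕ) (n s : ℕ) :
    Gam X Y n s = #{σ : Perm (Fin n) | gammaCount X Y n σ = s} := by
  rw [Gam, Nat.card_eq_fintype_card, Fintype.card_ofFinset]
  congr 1

theorem Gamma_formula_general (X Y : Set ℕ)
    (hUnion : X ∪ Y = {m : ℕ | 1 ≤ m}) (hInter : X ∩ Y = ∅)
    (n : ℕ) :
    (∀ s : ℕ, (∀ k : ℕ, (s : ℤ) ≠ 2 * (k : ℤ) + (cnt Y n : ℤ) - (cnt X n : ℤ)) →
      Gam X Y n s = 0) ∧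
    (∀ k s : ℕ, k ≤ cnt X n → cnt X n - k ≤ cnt Y n →
      (s : ℤ) = 2 * (k : ℤ) + (cnt Y n : ℤ) - (cnt X n : ℤ) →
      Gam X Y n s =
        (cnt X n).factorial * (cnt Y n).factorial *
          (cnt X n).choose k * (cnt Y n).choose (cnt X n - k)) := by
  classical
  have hY : ∀ m, 1 ≤ m → (m ∈ Y ↔ m ∉ X) := fun m hm => by
    have := Set.ext_iff.1 hUnion m
    have := Set.ext_iff.1 hInter m
    simp only [Set.mem_union, Set.mem_inter_iff, Set.mem_ofPred_eq, Set.mem_empty_iff_false] at *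
    tauto
  obtain ⟨A, hA⟩ : ∃ A : Finset (Fin n), ∀ i : Fin n, i ∈ A ↔ (i : ℕ) + 1 ∈ X :=
    ⟨({i | (i : ℕ) + 1 ∈ X} : Finset (Fin n)), by simp⟩
  have hx : cnt X n = #A := cnt_eq_card hA
  have hy : cnt Y n = #Aᶜ := cnt_eq_card fun i => by simp [hA, hY _ (Nat.succ_pos _)]
  have hγ (σ : Perm (Fin n)) :
      (gammaCount X Y n σ : ℤ) = 2 * #{i ∈ A | σ i ∈ A} + #Aᶜ - #A := by
    have := σ.card_filter_mem_iff_apply_mem_add A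
    rw [gammaCount_eq_card hY hA]
    omega
  refine ⟨fun s hs => ?_, fun k s _ _ hs => ?_⟩
  · rw [Gam_eq_card, Finset.card_eq_zero, filter_eq_empty_iff]
    intro σ _ hσ
    exact hs #{i ∈ A | σ i ∈ A} (by rw [← hσ, hγ, hx, hy])
  · rw [Gam_eq_card, hx, hy, mul_assoc _ ((#A).choose k),
      ← Perm.card_filter_card_filter_apply_mem_eq]
    congr 1
    ext σ
    have := hγ σ
    simp only [mem_filter, mem_univ, true_and]
    omega

/-- Theorem 8: if `X ∪ Y` is the set of positive integers and `X ∩ Y = ∅`, then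
`Γ_{n,s}^{X,Y} = 0` unless `s = 2k + y_n - x_n` for some `k ≥ 0`, in which case
`Γ_{n,2k+y_n-x_n}^{X,Y} = x_n! y_n! C(x_n, k) C(y_n, x_n - k)`. -/
theorem Gamma_formula (X Y : Set ℕ) (hX : 0 ∉ X) (hY : 0 ∉ Y)
    (hUnion : X ∪ Y = {m : ℕ | 1 ≤ m}) (hInter : X ∩ Y = ∅)
    (n : ℕ) (hn : 1 ≤ n) :
    (∀ s : ℕ, (∀ k : ℕ, (s : ℤ) ≠ 2 * (k : ℤ) + (cnt Y n : ℤ) - (cnt X n : ℤ)) →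
      Gam X Y n s = 0) ∧
    (∀ k s : ℕ, k ≤ cnt X n → cnt X n - k ≤ cnt Y n →
      (s : ℤ) = 2 * (k : ℤ) + (cnt Y n : ℤ) - (cnt X n : ℤ) →
      Gam X Y n s =
        (cnt X n).factorial * (cnt Y n).factorial *
          (cnt X n).choose k * (cnt Y n).choose (cnt X n - k)) :=
  Gamma_formula_general X Y hUnion hInter n
end
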